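/- arXiv:1411.4553 — 6 statements merged into one kernel-verified Lean document; each statement's English description precedes it below -/
import Mathlib

section
/- For all differentiable vector fields X, Y, Z, W on ℂ^m one has L_{X∘Y}(∘)(Z,W) = X ∘ (L_Y(∘)(Z,W)) + Y ∘ (L_X(∘)(Z,W)); that is, the truncated-polynomial multiplication on ℂ^m satisfies the Hertling–Manin integrability condition L_{X∘Y}(∘) = X∘L_Y(∘) + Y∘L_X(∘) of the definition of an F-manifold. -/
/-! `L_X(∘)(Z,W)` is tensorial: at `p` it is `A z ∘ w + z ∘ A w − A (z ∘ w)` with `A = DX(p)`,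
the failure of `A` to be a derivation of `∘`. This defect is additive in `A`, and since `∘` is
commutative and associative, the defect of `x ∘ A` is `x ∘ (defect of A)`. The Leibniz rule
`D(X ∘ Y) = X ∘ DY + Y ∘ DX` then gives the identity. -/

open scoped BigOperators

noncomputable section

/-- The truncated-polynomial multiplication on `ℂ^m ≅ ℂ[X]/(X^m)`:
`(u ∘ v)_k = Σ_{i+j=k} u_i v_j`. -/
def tmul {m : ℕ} (u v : Fin m → ℂ) : Fin m → ℂ :=
  fun k => ∑ i : Fin m, ∑ j : Fin m,
    if (i : ℕ) + (j : ℕ) = (k : ℕ) then u i * v j else 0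

/-- The `i`-th standard basis vector of `ℂ^m` (zero if `i ≥ m`); `std 0` is the unit `e`. -/
def std {m : ℕ} (i : ℕ) : Fin m → ℂ := fun j => if (j : ℕ) = i then 1 else 0

/-- Lie bracket of vector fields on `ℂ^m`: `[X,Y](p) = DY(p)(X(p)) − DX(p)(Y(p))`. -/
def bracket {m : ℕ} (X Y : (Fin m → ℂ) → Fin m → ℂ) : (Fin m → ℂ) → Fin m → ℂ :=
  fun p => fderiv ℂ Y p (X p) - fderiv ℂ X p (Y p)

/-- Pointwise truncated product of vector fields. -/
def pmul {m : ℕ} (X Y : (Fin m → ℂ) → Fin m → ℂ) : (Fin m → ℂ) → Fin m → ℂ :=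
  fun p => tmul (X p) (Y p)

/-- Lie derivative of the multiplication `∘` along `X`:
`L_X(∘)(Y,Z) = [X, Y∘Z] − [X,Y]∘Z − Y∘[X,Z]`. -/
def lieD {m : ℕ} (X Y Z : (Fin m → ℂ) → Fin m → ℂ) : (Fin m → ℂ) → Fin m → ℂ :=
  fun p => bracket X (pmul Y Z) p - tmul (bracket X Y p) (Z p) - tmul (Y p) (bracket X Z p)

/-- The Euler field `E(t) = (t_0 + a, t_1 + 1, t_2, …, t_{m−1})`. -/
def Efield {m : ℕ} (a : ℂ) : (Fin m → ℂ) → Fin m → ℂ :=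
  fun p => p + a • std 0 + std 1

open Polynomial

lemma coeff_mul_congr_left {R : Type*} [Semiring R] {P P' : R[X]} (Q : R[X]) {n : ℕ}
    (h : ∀ i ≤ n, P.coeff i = P'.coeff i) : (P * Q).coeff n = (P' * Q).coeff n := by
  simp only [coeff_mul]
  refine Finset.sum_congr rfl fun x hx => ?_
  rw [h x.1 (Finset.HasAntidiagonal.antidiagonal.fst_le hx)]

section

variable {m : ℕ}

def toPoly : (Fin m → ℂ) →ₗ[ℂ] ℂ[X] :=
  ∑ i : Fin m, (monomial (i : ℕ)).comp (LinearMap.proj i)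

lemma toPoly_apply (u : Fin m → ℂ) : toPoly u = ∑ i : Fin m, monomial (i : ℕ) (u i) := by
  simp [toPoly, LinearMap.sum_apply]

lemma coeff_toPoly (u : Fin m → ℂ) (i : Fin m) : (toPoly u).coeff i = u i := by
  rw [toPoly_apply, finsetSum_coeff, Finset.sum_eq_single i]
  · simp
  · intro j _ hj
    rw [coeff_monomial, if_neg (fun h => hj (Fin.ext h))]
  · simp

lemma tmul_eq_coeff (u v : Fin m → ℂ) (k : Fin m) :
    tmul u v k = (toPoly u * toPoly v).coeff k := by
  simp only [tmul, toPoly_apply, Finset.sum_mul_sum, finsetSum_coeff, monomial_mul_monomial,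
    coeff_monomial]

lemma tmul_comm (u v : Fin m → ℂ) : tmul u v = tmul v u := by
  funext k
  rw [tmul_eq_coeff, tmul_eq_coeff, mul_comm]

lemma coeff_toPoly_tmul (u v : Fin m → ℂ) {n : ℕ} (hn : n < m) :
    (toPoly (tmul u v)).coeff n = (toPoly u * toPoly v).coeff n := by
  rw [← tmul_eq_coeff u v ⟨n, hn⟩, ← coeff_toPoly (tmul u v) ⟨n, hn⟩]

lemma tmul_eq_coeff_mul_toPoly_tmul (u v w : Fin m → ℂ) (k : Fin m) :
    tmul (tmul u v) w k = (toPoly u * toPoly v * toPoly w).coeff k :=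
  (tmul_eq_coeff _ _ k).trans <| coeff_mul_congr_left _ fun _ hi =>
    coeff_toPoly_tmul u v (hi.trans_lt k.isLt)

lemma tmul_assoc (u v w : Fin m → ℂ) : tmul (tmul u v) w = tmul u (tmul v w) := by
  funext k
  rw [tmul_comm u (tmul v w), tmul_eq_coeff_mul_toPoly_tmul, tmul_eq_coeff_mul_toPoly_tmul]
  congr 1
  ring

lemma tmul_left_comm (u v w : Fin m → ℂ) : tmul u (tmul v w) = tmul v (tmul u w) := by
  rw [← tmul_assoc, tmul_comm u v, tmul_assoc]

def tmulBilin : (Fin m → ℂ) →ₗ[ℂ] (Fin m → ℂ) →ₗ[ℂ] Fin m → ℂ :=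
  ((LinearMap.mul ℂ ℂ[X]).compl₁₂ toPoly toPoly).compr₂
    (LinearMap.pi fun k : Fin m => lcoeff ℂ (k : ℕ))

lemma tmulBilin_apply (u v : Fin m → ℂ) : tmulBilin u v = tmul u v := by
  funext k
  simp [tmulBilin, tmul_eq_coeff]

lemma tmul_add_left (u u' v : Fin m → ℂ) : tmul (u + u') v = tmul u v + tmul u' v := by
  simp only [← tmulBilin_apply, map_add, LinearMap.add_apply]

lemma tmul_add_right (u v v' : Fin m → ℂ) : tmul u (v + v') = tmul u v + tmul u v' := by
  simp only [← tmulBilin_apply, map_add]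

lemma tmul_sub_left (u u' v : Fin m → ℂ) : tmul (u - u') v = tmul u v - tmul u' v := by
  simp only [← tmulBilin_apply, map_sub, LinearMap.sub_apply]

lemma tmul_sub_right (u v v' : Fin m → ℂ) : tmul u (v - v') = tmul u v - tmul u v' := by
  simp only [← tmulBilin_apply, map_sub]

def tmulCLM : (Fin m → ℂ) →L[ℂ] (Fin m → ℂ) →L[ℂ] Fin m → ℂ :=
  tmulBilin.toContinuousBilinearMap

lemma tmulCLM_apply (u v : Fin m → ℂ) : tmulCLM u v = tmul u v :=
  tmulBilin_apply u v

variable {X Y Z W : (Fin m → ℂ) → Fin m → ℂ}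

lemma fderiv_pmul (hX : Differentiable ℂ X) (hY : Differentiable ℂ Y) (p : Fin m → ℂ) :
    fderiv ℂ (pmul X Y) p =
      (tmulCLM (X p)).comp (fderiv ℂ Y p) + (tmulCLM (Y p)).comp (fderiv ℂ X p) := by
  have hpmul : pmul X Y = fun q => tmulCLM (X q) (Y q) :=
    funext fun q => (tmulCLM_apply _ _).symm
  rw [hpmul, tmulCLM.fderiv_of_bilinear (hX p) (hY p)]
  ext1 v
  simp [tmulCLM_apply, tmul_comm _ (Y p)]

def leibnizDefect (A : (Fin m → ℂ) →L[ℂ] Fin m → ℂ) (z w : Fin m → ℂ) : Fin m → ℂ :=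
  tmul (A z) w + tmul z (A w) - A (tmul z w)

lemma leibnizDefect_add (A B : (Fin m → ℂ) →L[ℂ] Fin m → ℂ) (z w : Fin m → ℂ) :
    leibnizDefect (A + B) z w = leibnizDefect A z w + leibnizDefect B z w := by
  simp only [leibnizDefect, add_apply, tmul_add_left, tmul_add_right]
  abel

lemma leibnizDefect_tmulCLM_comp (x : Fin m → ℂ) (A : (Fin m → ℂ) →L[ℂ] Fin m → ℂ)
    (z w : Fin m → ℂ) :
    leibnizDefect ((tmulCLM x).comp A) z w = tmul x (leibnizDefect A z w) := by
  simp only [leibnizDefect, ContinuousLinearMap.comp_apply, tmulCLM_apply, tmul_add_right,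
    tmul_sub_right, tmul_assoc, tmul_left_comm z x]

lemma lieD_eq_leibnizDefect (hZ : Differentiable ℂ Z) (hW : Differentiable ℂ W)
    (p : Fin m → ℂ) : lieD X Z W p = leibnizDefect (fderiv ℂ X p) (Z p) (W p) := by
  simp only [lieD, bracket, pmul, leibnizDefect, fderiv_pmul hZ hW, add_apply,
    ContinuousLinearMap.comp_apply, tmulCLM_apply, tmul_sub_left, tmul_sub_right]
  rw [tmul_comm (W p) (fderiv ℂ Z p (X p))]
  abel

end

theorem stmt1_general {m : ℕ}
    (X Y Z W : (Fin m → ℂ) → Fin m → ℂ)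
    (hX : Differentiable ℂ X) (hY : Differentiable ℂ Y)
    (hZ : Differentiable ℂ Z) (hW : Differentiable ℂ W) :
    lieD (pmul X Y) Z W = fun p => pmul X (lieD Y Z W) p + pmul Y (lieD X Z W) p := by
  funext p
  rw [lieD_eq_leibnizDefect hZ hW, fderiv_pmul hX hY, leibnizDefect_add,
    leibnizDefect_tmulCLM_comp, leibnizDefect_tmulCLM_comp, pmul, pmul,
    lieD_eq_leibnizDefect hZ hW, lieD_eq_leibnizDefect hZ hW]

/-- The truncated-polynomial multiplication on `ℂ^m` satisfies the
Hertling–Manin integrability condition: for all differentiable vector fields `X, Y, Z, W`,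
`L_{X∘Y}(∘)(Z,W) = X ∘ (L_Y(∘)(Z,W)) + Y ∘ (L_X(∘)(Z,W))`. -/
theorem stmt1 {m : ℕ} (hm : 1 ≤ m)
    (X Y Z W : (Fin m → ℂ) → Fin m → ℂ)
    (hX : Differentiable ℂ X) (hY : Differentiable ℂ Y)
    (hZ : Differentiable ℂ Z) (hW : Differentiable ℂ W) :
    lieD (pmul X Y) Z W = fun p => pmul X (lieD Y Z W) p + pmul Y (lieD X Z W) p :=
  stmt1_general X Y Z W hX hY hZ hW
end
end

section
/- Define vector fields X_i : ℂ^m → ℂ^m by X_i(t) = E(t)^{∘i}, the i-th power of E(t) in the truncated polynomial algebra (so X_0 = e, the constant unit field, and X_1 = E). Then for all integers i, j ≥ 0 with i + j ≥ 1 one has [X_i, X_j] = (j − i) · X_{i+j−1}. -/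
open scoped BigOperators

noncomputable section

/-- Powers in the truncated polynomial algebra: `tpow u 0 = e`, `tpow u (k+1) = u ∘ tpow u k`. -/
def tpow {m : ℕ} (u : Fin m → ℂ) : ℕ → Fin m → ℂ
  | 0 => std 0
  | k + 1 => tmul u (tpow u k)

/-!
The map sending `u ∈ ℂ^m` to the class of `∑ u_k X^k` in `ℂ⟦X⟧ ⧸ (X^m)` is injective and turns
`∘` into the ring product, so `∘` is commutative and associative and `tpow` is the ring power.
Hence `X_k = E^k` has derivative `h ↦ k E^(k-1) ∘ h` (as `DE = id`), and
`[X_i, X_j] = j E^(j-1) ∘ E^i - i E^(i-1) ∘ E^j = (j - i) E^(i+j-1)`; the factors `j` and `i`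
absorb the cases where the truncated subtractions `j - 1`, `i - 1` misbehave.
-/

open PowerSeries

namespace TruncatedPolynomial

variable {m : ℕ}

def toPowerSeries (u : Fin m → ℂ) : ℂ⟦X⟧ :=
  PowerSeries.mk fun n => if h : n < m then u ⟨n, h⟩ else 0

lemma coeff_toPowerSeries (u : Fin m → ℂ) (k : Fin m) : coeff k (toPowerSeries u) = u k := by
  simp [toPowerSeries]

lemma tmul_apply_eq_coeff_mul (u v : Fin m → ℂ) (k : Fin m) :
    tmul u v k = coeff k (toPowerSeries u * toPowerSeries v) := by
  set f := fun n => coeff n (toPowerSeries u)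
  set g := fun n => coeff n (toPowerSeries v)
  have hfilter : {p ∈ Finset.range m ×ˢ Finset.range m | p.1 + p.2 = (k : ℕ)} =
      Finset.HasAntidiagonal.antidiagonal (k : ℕ) := by
    ext p; simp only [Finset.mem_filter, Finset.mem_product, Finset.mem_range,
      Finset.HasAntidiagonal.mem_antidiagonal]; omega
  calc tmul u v k
      = ∑ i ∈ Finset.range m, ∑ j ∈ Finset.range m,
          if i + j = (k : ℕ) then f i * g j else 0 := by
        simp only [tmul, f, g, coeff_toPowerSeries, ← Fin.sum_univ_eq_sum_range]
    _ = ∑ p ∈ Finset.HasAntidiagonal.antidiagonal (k : ℕ), f p.1 * g p.2 := by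
        rw [← hfilter, Finset.sum_filter, Finset.sum_product]
    _ = coeff k (toPowerSeries u * toPowerSeries v) := (coeff_mul _ _ _).symm

def toQuotient (u : Fin m → ℂ) : ℂ⟦X⟧ ⧸ Ideal.span {(X : ℂ⟦X⟧) ^ m} :=
  Ideal.Quotient.mk _ (toPowerSeries u)

lemma toQuotient_eq_iff (u : Fin m → ℂ) (φ : ℂ⟦X⟧) :
    toQuotient u = Ideal.Quotient.mk _ φ ↔ ∀ k : Fin m, u k = coeff k φ := by
  rw [toQuotient, Ideal.Quotient.eq, Ideal.mem_span_singleton, X_pow_dvd_iff]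
  refine ⟨fun h k => ?_, fun h n hn => ?_⟩
  · simpa [sub_eq_zero, coeff_toPowerSeries] using h k k.isLt
  · rw [map_sub, sub_eq_zero, ← h ⟨n, hn⟩]
    exact coeff_toPowerSeries u ⟨n, hn⟩

lemma toQuotient_injective : Function.Injective (toQuotient (m := m)) := by
  intro u v h
  funext k
  rw [(toQuotient_eq_iff u _).1 h k, coeff_toPowerSeries]

lemma toQuotient_tmul (u v : Fin m → ℂ) : toQuotient (tmul u v) = toQuotient u * toQuotient v :=
  (toQuotient_eq_iff _ _).2 (tmul_apply_eq_coeff_mul u v)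

lemma toQuotient_std_zero : toQuotient (std 0 : Fin m → ℂ) = 1 :=
  (toQuotient_eq_iff _ _).2 fun k => by simp [std, coeff_one]

lemma toQuotient_tpow (u : Fin m → ℂ) (k : ℕ) : toQuotient (tpow u k) = toQuotient u ^ k := by
  induction k with
  | zero => exact toQuotient_std_zero
  | succ k ih => rw [tpow, toQuotient_tmul, ih, pow_succ']

lemma tmul_comm (u v : Fin m → ℂ) : tmul u v = tmul v u :=
  toQuotient_injective (by simp only [toQuotient_tmul, mul_comm])

lemma tmul_assoc (u v w : Fin m → ℂ) : tmul (tmul u v) w = tmul u (tmul v w) :=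
  toQuotient_injective (by simp only [toQuotient_tmul, mul_assoc])

lemma tpow_add (u : Fin m → ℂ) (k l : ℕ) : tpow u (k + l) = tmul (tpow u k) (tpow u l) :=
  toQuotient_injective (by simp only [toQuotient_tmul, toQuotient_tpow, pow_add])

lemma tpow_one (u : Fin m → ℂ) : tpow u 1 = u :=
  toQuotient_injective (by rw [toQuotient_tpow, pow_one])

lemma tmul_add_left (u u' v : Fin m → ℂ) : tmul (u + u') v = tmul u v + tmul u' v := by
  funext k
  simp only [tmul, Pi.add_apply, add_mul, ← Finset.sum_add_distrib, ite_add_zero]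

lemma tmul_smul_left (c : ℂ) (u v : Fin m → ℂ) : tmul (c • u) v = c • tmul u v := by
  funext k
  simp only [tmul, Pi.smul_apply, smul_eq_mul, Finset.mul_sum, mul_ite, mul_zero, mul_assoc]

lemma tmul_add_right (u v v' : Fin m → ℂ) : tmul u (v + v') = tmul u v + tmul u v' := by
  rw [tmul_comm, tmul_add_left, tmul_comm v, tmul_comm v']

lemma tmul_smul_right (c : ℂ) (u v : Fin m → ℂ) : tmul u (c • v) = c • tmul u v := by
  rw [tmul_comm, tmul_smul_left, tmul_comm]

variable (m) in
def mulCLM : (Fin m → ℂ) →L[ℂ] (Fin m → ℂ) →L[ℂ] (Fin m → ℂ) :=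
  LinearMap.toContinuousLinearMap <| LinearMap.toContinuousLinearMap.toLinearMap ∘ₗ
    LinearMap.mk₂ ℂ tmul tmul_add_left tmul_smul_left tmul_add_right tmul_smul_right

@[simp] lemma mulCLM_apply (u v : Fin m → ℂ) : mulCLM m u v = tmul u v := rfl

lemma natCast_smul_tmul_tpow_pred (u : Fin m → ℂ) (k l : ℕ) :
    (k : ℂ) • tmul (tpow u (k - 1)) (tpow u l) = (k : ℂ) • tpow u (l + k - 1) := by
  cases k with
  | zero => simp
  | succ k => rw [Nat.add_sub_cancel, ← tpow_add, show l + (k + 1) - 1 = k + l by omega]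

lemma hasFDerivAt_tpow (k : ℕ) (u : Fin m → ℂ) :
    HasFDerivAt (fun w => tpow w k) ((k : ℂ) • mulCLM m (tpow u (k - 1))) u := by
  induction k with
  | zero => exact (hasFDerivAt_const _ _).congr_fderiv (by ext; simp)
  | succ k ih =>
    refine ((mulCLM m).hasFDerivAt_of_bilinear (hasFDerivAt_id (𝕜 := ℂ) u) ih).congr_fderiv ?_
    ext1 h
    simp only [ContinuousLinearMap.precompR_apply, ContinuousLinearMap.compL_apply,
      ContinuousLinearMap.precompL_apply, ContinuousLinearMap.comp_apply,
      ContinuousLinearMap.id_apply, add_apply, smul_apply,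
      id_eq, map_smul, mulCLM_apply, Nat.cast_succ]
    calc (k : ℂ) • tmul u (tmul (tpow u (k - 1)) h) + tmul h (tpow u k)
        = tmul ((k : ℂ) • tmul (tpow u (k - 1)) (tpow u 1)) h + tmul (tpow u k) h := by
          rw [tpow_one, tmul_smul_left, tmul_comm _ u, tmul_assoc, tmul_comm h]
      _ = ((k : ℂ) + 1) • tmul (tpow u k) h := by
          rw [natCast_smul_tmul_tpow_pred, Nat.add_sub_cancel_left, tmul_smul_left, add_smul,
            one_smul]

lemma hasFDerivAt_Efield (a : ℂ) (p : Fin m → ℂ) :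
    HasFDerivAt (Efield a) (ContinuousLinearMap.id ℂ (Fin m → ℂ)) p :=
  ((hasFDerivAt_id p).add_const _).add_const _

lemma hasFDerivAt_tpow_Efield (a : ℂ) (k : ℕ) (p : Fin m → ℂ) :
    HasFDerivAt (fun q => tpow (Efield a q) k)
      ((k : ℂ) • mulCLM m (tpow (Efield a p) (k - 1))) p := by
  simpa using (hasFDerivAt_tpow k _).comp p (hasFDerivAt_Efield a p)

end TruncatedPolynomial

open TruncatedPolynomial

theorem stmt3_general {m : ℕ} (a : ℂ) (i j : ℕ) :
    bracket (fun p : Fin m → ℂ => tpow (Efield a p) i)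
        (fun p : Fin m → ℂ => tpow (Efield a p) j)
      = fun p : Fin m → ℂ => ((j : ℂ) - (i : ℂ)) • tpow (Efield a p) (i + j - 1) := by
  funext p
  rw [bracket, (hasFDerivAt_tpow_Efield a i p).fderiv, (hasFDerivAt_tpow_Efield a j p).fderiv]
  simp only [smul_apply, mulCLM_apply, natCast_smul_tmul_tpow_pred, add_comm j i, sub_smul]

/-- With `X_i(t) := E(t)^{∘i}` (so `X_0 = e`, `X_1 = E`), for all integers
`i, j ≥ 0` with `i + j ≥ 1` one has `[X_i, X_j] = (j − i) · X_{i+j−1}`. -/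
theorem stmt3 {m : ℕ} (hm : 1 ≤ m) (a : ℂ) (i j : ℕ) (hij : 1 ≤ i + j) :
    bracket (fun p : Fin m → ℂ => tpow (Efield a p) i)
        (fun p : Fin m → ℂ => tpow (Efield a p) j)
      = fun p : Fin m → ℂ => ((j : ℂ) - (i : ℂ)) • tpow (Efield a p) (i + j - 1) :=
  stmt3_general a i j
end
end

section
/- Let m ≥ 2 and let X be a differentiable vector field on ℂ^m. Then L_X(∘)(Y,Z) = 0 for all differentiable vector fields Y, Z if and only if the following three conditions hold: [δ_0, X] = 0; [δ_1, X] ∘ δ_{m−1} = 0; and [δ_i, X] = i · (δ_{i−1} ∘ [δ_1, X]) for every 2 ≤ i ≤ m−1. -/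
open scoped BigOperators

noncomputable section

/-!
Because `D(Y ∘ Z) = DY ∘ Z + Y ∘ DZ`, the derivatives of `Y` and `Z` cancel in `L_X(∘)(Y,Z)`,
which becomes `DX(p)(Y p) ∘ Z p + Y p ∘ DX(p)(Z p) − DX(p)(Y p ∘ Z p)`. So `L_X(∘) = 0` says
exactly that every `DX(p)` is a derivation of `ℂ[X]/(X^m)`, and `[δ_i, X](p) = DX(p)(δ_i)`.
A derivation `φ` obeys the power rule `φ(δ_{k+1}) = (k+1) δ_k ∘ φ(δ_1)`; conversely this rule
(with `φ(δ_0) = 0`) defines a derivation on the basis, and it is consistent with `δ_m = 0`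
exactly when `m δ_{m−1} ∘ φ(δ_1) = 0`.
-/

namespace TruncatedPoly

variable {m : ℕ}

lemma tmul_apply_eq_sum (u v : Fin m → ℂ) (k : Fin m) :
    tmul u v k = ∑ i : Fin m, ∑ j : Fin m, (if (i : ℕ) + j = k then 1 else 0) * (u i * v j) := by
  simp only [tmul, boole_mul]

def tmulₗ : (Fin m → ℂ) →ₗ[ℂ] (Fin m → ℂ) →ₗ[ℂ] Fin m → ℂ :=
  LinearMap.mk₂ ℂ tmul
    (fun u u' v => by
      ext k; simp only [tmul_apply_eq_sum, Pi.add_apply, add_mul, mul_add, Finset.sum_add_distrib])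
    (fun c u v => by
      ext k
      simp only [tmul_apply_eq_sum, Pi.smul_apply, smul_eq_mul, Finset.mul_sum, mul_assoc,
        mul_left_comm _ c])
    (fun u v v' => by
      ext k; simp only [tmul_apply_eq_sum, Pi.add_apply, mul_add, Finset.sum_add_distrib])
    (fun c u v => by
      ext k
      simp only [tmul_apply_eq_sum, Pi.smul_apply, smul_eq_mul, Finset.mul_sum, mul_left_comm _ c])

@[simp] lemma tmulₗ_apply (u v : Fin m → ℂ) : tmulₗ u v = tmul u v := rfl

@[simp] lemma zero_tmul (v : Fin m → ℂ) : tmul 0 v = 0 := LinearMap.map_zero₂ tmulₗ v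

@[simp] lemma tmul_zero (u : Fin m → ℂ) : tmul u 0 = 0 := (tmulₗ u).map_zero

@[simp] lemma smul_tmul (c : ℂ) (u v : Fin m → ℂ) : tmul (c • u) v = c • tmul u v :=
  LinearMap.map_smul₂ tmulₗ c u v

@[simp] lemma tmul_smul (c : ℂ) (u v : Fin m → ℂ) : tmul u (c • v) = c • tmul u v :=
  (tmulₗ u).map_smul c v

lemma sub_tmul (u u' v : Fin m → ℂ) : tmul (u - u') v = tmul u v - tmul u' v :=
  LinearMap.map_sub₂ tmulₗ u u' v

lemma tmul_sub (u v v' : Fin m → ℂ) : tmul u (v - v') = tmul u v - tmul u v' :=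
  (tmulₗ u).map_sub v v'

lemma std_val_eq_single (i : Fin m) : (std i : Fin m → ℂ) = Pi.single i 1 := by
  ext j
  simp [std, Pi.single_apply, Fin.val_inj]

lemma std_eq_zero {i : ℕ} (h : m ≤ i) : (std i : Fin m → ℂ) = 0 := by
  ext j
  simp [std, show (j : ℕ) ≠ i by omega]

lemma tmul_std_std (a b : ℕ) : tmul (std a : Fin m → ℂ) (std b) = std (a + b) := by
  ext k
  by_cases hk : (k : ℕ) = a + b
  · rw [tmul, Finset.sum_eq_single ⟨a, by omega⟩, Finset.sum_eq_single ⟨b, by omega⟩] <;>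
      intros <;> simp_all [std, Fin.ext_iff]
  · have hzero : (std (a + b) : Fin m → ℂ) k = 0 := if_neg hk
    rw [hzero, tmul]
    refine Finset.sum_eq_zero fun i _ => Finset.sum_eq_zero fun j _ => ?_
    simp only [std]
    split_ifs <;> first | omega | simp

lemma tmul_comm (u v : Fin m → ℂ) : tmul u v = tmul v u := by
  have h : tmulₗ = (tmulₗ : (Fin m → ℂ) →ₗ[ℂ] _ →ₗ[ℂ] _).flip :=
    LinearMap.ext_basis (Pi.basisFun ℂ (Fin m)) (Pi.basisFun ℂ (Fin m)) fun i j => by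
      simp [Pi.basisFun_apply, ← std_val_eq_single, tmul_std_std, add_comm]
  exact LinearMap.congr_fun₂ h u v

lemma std_zero_tmul (v : Fin m → ℂ) : tmul (std 0) v = v := by
  have h : tmulₗ (std 0) = (LinearMap.id : (Fin m → ℂ) →ₗ[ℂ] _) :=
    (Pi.basisFun ℂ (Fin m)).ext fun j => by
      simp [Pi.basisFun_apply, ← std_val_eq_single, tmul_std_std]
  exact LinearMap.congr_fun h v

lemma std_tmul_std_tmul (a b : ℕ) (v : Fin m → ℂ) :
    tmul (std a) (tmul (std b) v) = tmul (std (a + b)) v := by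
  have h : tmulₗ (std a) ∘ₗ tmulₗ (std b) = (tmulₗ (std (a + b)) : (Fin m → ℂ) →ₗ[ℂ] _) :=
    (Pi.basisFun ℂ (Fin m)).ext fun j => by
      simp [Pi.basisFun_apply, ← std_val_eq_single, tmul_std_std, add_assoc]
  exact LinearMap.congr_fun h v

def IsLeibniz (φ : (Fin m → ℂ) →ₗ[ℂ] Fin m → ℂ) : Prop :=
  ∀ u v, φ (tmul u v) = tmul (φ u) v + tmul u (φ v)

section Leibniz

variable {φ : (Fin m → ℂ) →ₗ[ℂ] Fin m → ℂ}

lemma IsLeibniz.map_std_zero (h : IsLeibniz φ) : φ (std 0) = 0 := by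
  have h00 := h (std 0) (std 0)
  rw [std_zero_tmul, std_zero_tmul, tmul_comm, std_zero_tmul] at h00
  simpa using h00

lemma IsLeibniz.map_std_succ (h : IsLeibniz φ) (k : ℕ) :
    φ (std (k + 1)) = ((k : ℂ) + 1) • tmul (std k) (φ (std 1)) := by
  induction k with
  | zero => simp [std_zero_tmul]
  | succ k ih =>
    rw [← add_comm 1, ← tmul_std_std, h, ih, tmul_smul, std_tmul_std_tmul, add_comm 1 k,
      tmul_comm]
    push_cast
    module

lemma isLeibniz_of_map_std (h0 : φ (std 0) = 0)
    (hs : ∀ k : ℕ, φ (std (k + 1)) = ((k : ℂ) + 1) • tmul (std k) (φ (std 1))) :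
    IsLeibniz φ := by
  have hstd (a b : ℕ) :
      φ (tmul (std a) (std b)) = tmul (φ (std a)) (std b) + tmul (std a) (φ (std b)) := by
    rcases a with _ | a
    · simp [h0, std_zero_tmul]
    rcases b with _ | b
    · simp [h0, tmul_comm _ (std 0), std_zero_tmul]
    rw [tmul_std_std, show a + 1 + (b + 1) = a + b + 1 + 1 by omega, hs (a + b + 1), hs a, hs b,
      smul_tmul, tmul_smul, tmul_comm (tmul (std a) _), std_tmul_std_tmul, std_tmul_std_tmul,
      show b + 1 + a = a + b + 1 by omega, show a + 1 + b = a + b + 1 by omega]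
    push_cast
    module
  have hB : tmulₗ.compr₂ φ = tmulₗ ∘ₗ φ + tmulₗ.compl₂ φ :=
    LinearMap.ext_basis (Pi.basisFun ℂ (Fin m)) (Pi.basisFun ℂ (Fin m)) fun i j => by
      simpa [Pi.basisFun_apply, ← std_val_eq_single] using hstd i j
  exact fun u v => LinearMap.congr_fun₂ hB u v

lemma map_std_succ_iff :
    (∀ k : ℕ, φ (std (k + 1)) = ((k : ℂ) + 1) • tmul (std k) (φ (std 1))) ↔
      tmul (φ (std 1)) (std (m - 1)) = 0 ∧
        ∀ i : ℕ, 2 ≤ i → i ≤ m - 1 → φ (std i) = (i : ℂ) • tmul (std (i - 1)) (φ (std 1)) := by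
  constructor
  · intro hs
    refine ⟨?_, fun i hi _ => ?_⟩
    · rcases Nat.eq_zero_or_pos m with rfl | hm
      · exact Subsingleton.elim _ _
      have hstd_m := hs (m - 1)
      rw [Nat.sub_add_cancel hm, std_eq_zero le_rfl, map_zero, eq_comm, smul_eq_zero] at hstd_m
      rw [tmul_comm]
      exact hstd_m.resolve_left (Nat.cast_add_one_ne_zero _)
    · obtain ⟨k, rfl⟩ : ∃ k, i = k + 1 := ⟨i - 1, by omega⟩
      simpa using hs k
  · rintro ⟨hann, hs⟩ k
    rcases Nat.eq_zero_or_pos k with rfl | hk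
    · simp [std_zero_tmul]
    by_cases hkm : k + 1 ≤ m - 1
    · simpa using hs (k + 1) (by omega) hkm
    rw [std_eq_zero (by omega), map_zero]
    rcases (show k + 1 = m ∨ m ≤ k by omega) with rfl | hmk
    · rw [Nat.add_sub_cancel] at hann
      rw [tmul_comm, hann, smul_zero]
    · rw [std_eq_zero hmk, zero_tmul, smul_zero]

lemma isLeibniz_iff : IsLeibniz φ ↔ φ (std 0) = 0 ∧ tmul (φ (std 1)) (std (m - 1)) = 0 ∧
    ∀ i : ℕ, 2 ≤ i → i ≤ m - 1 → φ (std i) = (i : ℂ) • tmul (std (i - 1)) (φ (std 1)) :=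
  ⟨fun h => ⟨h.map_std_zero, map_std_succ_iff.1 h.map_std_succ⟩,
    fun h => isLeibniz_of_map_std h.1 (map_std_succ_iff.2 h.2)⟩

end Leibniz

section VectorFields

variable {X Y Z : (Fin m → ℂ) → Fin m → ℂ} {p : Fin m → ℂ}

lemma bracket_const_left (c : Fin m → ℂ) : bracket (fun _ => c) X = fun p => fderiv ℂ X p c := by
  ext p
  simp [bracket]

lemma fderiv_pmul_apply (hY : DifferentiableAt ℂ Y p) (hZ : DifferentiableAt ℂ Z p)
    (w : Fin m → ℂ) :
    fderiv ℂ (pmul Y Z) p w = tmul (fderiv ℂ Y p w) (Z p) + tmul (Y p) (fderiv ℂ Z p w) := by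
  rw [show pmul Y Z = fun q => tmulₗ.toContinuousBilinearMap (Y q) (Z q) from rfl,
    tmulₗ.toContinuousBilinearMap.fderiv_of_bilinear hY hZ]
  simp [add_comm]

lemma lieD_apply (hY : DifferentiableAt ℂ Y p) (hZ : DifferentiableAt ℂ Z p) :
    lieD X Y Z p = tmul (fderiv ℂ X p (Y p)) (Z p) + tmul (Y p) (fderiv ℂ X p (Z p))
      - fderiv ℂ X p (tmul (Y p) (Z p)) := by
  rw [lieD, bracket, fderiv_pmul_apply hY hZ, bracket, bracket, sub_tmul, tmul_sub, pmul]
  abel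

lemma forall_lieD_eq_zero_iff :
    (∀ Y Z : (Fin m → ℂ) → Fin m → ℂ, Differentiable ℂ Y → Differentiable ℂ Z →
        lieD X Y Z = 0) ↔
      ∀ p, IsLeibniz (fderiv ℂ X p : (Fin m → ℂ) →ₗ[ℂ] Fin m → ℂ) := by
  constructor
  · intro h p u v
    have hconst := congrFun (h _ _ (differentiable_const u) (differentiable_const v)) p
    rw [lieD_apply (differentiableAt_const u) (differentiableAt_const v), Pi.zero_apply,
      sub_eq_zero] at hconst
    exact hconst.symm
  · intro h Y Z hY hZ
    ext1 p
    rw [lieD_apply (hY p) (hZ p), Pi.zero_apply, sub_eq_zero]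
    exact (h p (Y p) (Z p)).symm

end VectorFields

end TruncatedPoly

open TruncatedPoly in
theorem stmt4_general {m : ℕ}
    (X : (Fin m → ℂ) → Fin m → ℂ) :
    (∀ Y Z : (Fin m → ℂ) → Fin m → ℂ, Differentiable ℂ Y → Differentiable ℂ Z →
        lieD X Y Z = 0) ↔
      (bracket (fun _ => std 0) X = 0 ∧
        (fun p => tmul (bracket (fun _ => std 1) X p) (std (m - 1)))
          = (0 : (Fin m → ℂ) → Fin m → ℂ) ∧
        ∀ i : ℕ, 2 ≤ i → i ≤ m - 1 →
          bracket (fun _ => std i) X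
            = fun p => (i : ℂ) • tmul (std (i - 1)) (bracket (fun _ => std 1) X p)) := by
  rw [forall_lieD_eq_zero_iff]
  simp only [isLeibniz_iff, bracket_const_left, funext_iff, ContinuousLinearMap.coe_coe,
    Pi.zero_apply, forall_and]
  exact ⟨fun ⟨h0, h1, h2⟩ => ⟨h0, h1, fun i hi hi' p => h2 p i hi hi'⟩,
    fun ⟨h0, h1, h2⟩ => ⟨h0, h1, fun p i hi hi' => h2 i hi hi' p⟩⟩

/-- (Lemma 29 of the paper.) For `m ≥ 2` and a differentiable vector
field `X` on `ℂ^m`: `L_X(∘) = 0` (i.e. `L_X(∘)(Y,Z) = 0` for all differentiable `Y, Z`) iff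
`[δ_0, X] = 0`, `[δ_1, X] ∘ δ_{m−1} = 0`, and `[δ_i, X] = i·(δ_{i−1} ∘ [δ_1, X])` for
`2 ≤ i ≤ m−1`. -/
theorem stmt4 {m : ℕ} (hm : 2 ≤ m)
    (X : (Fin m → ℂ) → Fin m → ℂ) (hX : Differentiable ℂ X) :
    (∀ Y Z : (Fin m → ℂ) → Fin m → ℂ, Differentiable ℂ Y → Differentiable ℂ Z →
        lieD X Y Z = 0) ↔
      (bracket (fun _ => std 0) X = 0 ∧
        (fun p => tmul (bracket (fun _ => std 1) X p) (std (m - 1)))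
          = (0 : (Fin m → ℂ) → Fin m → ℂ) ∧
        ∀ i : ℕ, 2 ≤ i → i ≤ m - 1 →
          bracket (fun _ => std i) X
            = fun p => (i : ℂ) • tmul (std (i - 1)) (bracket (fun _ => std 1) X p)) :=
  stmt4_general X
end
end

section
/- Let m ≥ 2 and let Y_1(t) := (0, t_1+1, 2t_2, 3t_3, …, (m−1)t_{m−1}) and Y_k := δ_{k−1} ∘ Y_1 for 2 ≤ k ≤ m−1. Then for all 1 ≤ i, j ≤ m−1: [Y_i, Y_j] = (i − j) · Y_{i+j−1} if i + j ≤ m, and [Y_i, Y_j] = 0 if i + j > m. -/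
open scoped BigOperators

noncomputable section

/-- The vector field `Y_1(t) = (0, t_1+1, 2t_2, 3t_3, …, (m−1)t_{m−1})`. -/
def Yone {m : ℕ} : (Fin m → ℂ) → Fin m → ℂ :=
  fun p j => if (j : ℕ) = 1 then p j + 1 else ((j : ℕ) : ℂ) * p j

/-- The infinitesimal symmetries `Y_1` and `Y_k := δ_{k−1} ∘ Y_1` for `k ≥ 2`. -/
def Ysym {m : ℕ} : ℕ → (Fin m → ℂ) → Fin m → ℂ
  | 1 => Yone
  | k => fun p => tmul (std (k - 1)) (Yone p)

/-- extension of `p` to `ℕ` by zero -/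
def qfun {m : ℕ} (p : Fin m → ℂ) (x : ℕ) : ℂ := if h : x < m then p ⟨x, h⟩ else 0

/-- abstract value of `Ysym k p` at index `s` -/
def gval (q : ℕ → ℂ) (k s : ℕ) : ℂ :=
  (if 1 ≤ k ∧ k ≤ s + 1 then ((s + 1 - k : ℕ) : ℂ) * q (s + 1 - k) else 0)
    + (if s = k then 1 else 0)

/-- linear part of `Ysym k` -/
def Lfun (m k : ℕ) : (Fin m → ℂ) → (Fin m → ℂ) :=
  fun p j =>
    if h : 1 ≤ k ∧ k ≤ (j : ℕ) + 1 then
      (((j : ℕ) + 1 - k : ℕ) : ℂ) * p ⟨(j : ℕ) + 1 - k, lt_of_le_of_lt (by omega) j.isLt⟩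
    else 0

lemma tmul_std {m : ℕ} (c : ℕ) (v : Fin m → ℂ) (r : Fin m) :
    tmul (std c) v r =
      if c ≤ (r : ℕ) then v ⟨(r : ℕ) - c, lt_of_le_of_lt (Nat.sub_le _ _) r.isLt⟩ else 0 := by
  unfold tmul std
  split_ifs with h
  · rw [Finset.sum_eq_single (⟨c, lt_of_le_of_lt h r.isLt⟩ : Fin m)]
    · rw [Finset.sum_eq_single (⟨(r : ℕ) - c, lt_of_le_of_lt (Nat.sub_le _ _) r.isLt⟩ : Fin m)]
      · simp [Nat.add_sub_cancel' h]
      · intro b _ hb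
        have : ¬ (c + (b : ℕ) = (r : ℕ)) := by
          intro hc
          apply hb
          apply Fin.ext
          simp ; omega
        simp [this]
      · simp
    · intro a _ ha
      have : ¬ ((a : ℕ) = c) := by
        intro hc; apply ha; apply Fin.ext; simpa using hc
      simp [this]
    · simp
  · apply Finset.sum_eq_zero
    intro a _
    apply Finset.sum_eq_zero
    intro b _
    by_cases hac : (a : ℕ) = c
    · have : ¬ ((a : ℕ) + (b : ℕ) = (r : ℕ)) := by omega
      simp [this]
    · simp [hac]

lemma Ysym_eq_gval {m : ℕ} (k : ℕ) (hk : 1 ≤ k) (p : Fin m → ℂ) (r : Fin m) :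
    Ysym k p r = gval (qfun p) k r := by
  have hr := r.isLt
  match k, hk with
  | 1, _ =>
    show Yone p r = _
    unfold Yone gval qfun
    rw [if_pos (show (1:ℕ) ≤ 1 ∧ 1 ≤ (r:ℕ) + 1 by omega)]
    simp only [Nat.add_sub_cancel]
    rw [dif_pos hr]
    simp only [Fin.eta]
    by_cases hr1 : (r : ℕ) = 1
    · rw [if_pos hr1, if_pos hr1, hr1]; norm_num
    · rw [if_neg hr1, if_neg hr1]; simp
  | (n + 2), _ =>
    show tmul (std (n + 2 - 1)) (Yone p) r = _
    rw [tmul_std]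
    unfold gval qfun Yone
    simp only [Fin.val_mk]
    split_ifs with h1 h2 h3 h4 h5 h6 h7 h8 <;> try omega
    · -- r - (n+1) = 1, i.e. r = n+2
      have hidx : (r : ℕ) - (n + 2 - 1) = 1 := h2
      have hidx2 : (r : ℕ) + 1 - (n + 2) = 1 := by omega
      simp only [hidx, hidx2]
      norm_num
    · have hidx : (r : ℕ) - (n + 2 - 1) = (r : ℕ) + 1 - (n + 2) := by omega
      simp only [hidx]
      ring
    · norm_num

def Lmap (m k : ℕ) : (Fin m → ℂ) →ₗ[ℂ] (Fin m → ℂ) where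
  toFun := Lfun m k
  map_add' u v := by
    funext r
    show Lfun m k (u + v) r = Lfun m k u r + Lfun m k v r
    unfold Lfun
    split_ifs with h
    · simp only [Pi.add_apply]; ring
    · simp
  map_smul' c u := by
    funext r
    show Lfun m k (c • u) r = (c • Lfun m k u) r
    simp only [Pi.smul_apply, smul_eq_mul]
    unfold Lfun
    split_ifs with h
    · simp only [Pi.smul_apply, smul_eq_mul]; ring
    · simp

def Lclm (m k : ℕ) : (Fin m → ℂ) →L[ℂ] (Fin m → ℂ) :=
  LinearMap.toContinuousLinearMap (Lmap m k)

lemma Lclm_apply (m k : ℕ) (p : Fin m → ℂ) : Lclm m k p = Lfun m k p := rfl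

lemma Lfun_add_std_eq_gval {m : ℕ} (k : ℕ) (hk : 1 ≤ k) (p : Fin m → ℂ) (r : Fin m) :
    Lfun m k p r + std k r = gval (qfun p) k r := by
  have hr := r.isLt
  unfold Lfun std gval qfun
  split_ifs <;> first | rfl | omega | norm_num

lemma Ysym_rep {m : ℕ} (k : ℕ) (hk : 1 ≤ k) :
    (Ysym k : (Fin m → ℂ) → Fin m → ℂ) = fun p => Lclm m k p + std k := by
  funext p r
  rw [Ysym_eq_gval k hk p r]
  rw [Pi.add_apply, Lclm_apply, Lfun_add_std_eq_gval k hk p r]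

lemma fderiv_Ysym {m : ℕ} (k : ℕ) (hk : 1 ≤ k) (p : Fin m → ℂ) :
    fderiv ℂ (Ysym k : (Fin m → ℂ) → Fin m → ℂ) p = Lclm m k := by
  rw [Ysym_rep k hk]
  rw [fderiv_add_const]
  exact (Lclm m k).fderiv

lemma gval_zero (q : ℕ → ℂ) (k n : ℕ) (hnk : n < k) : gval q k n = 0 := by
  unfold gval
  split_ifs with h1 h2 h2 <;> try (exfalso; omega)
  · rw [show n + 1 - k = 0 from by omega]
    norm_num
  · norm_num

lemma core (q : ℕ → ℂ) (n i j : ℕ) (hi : 1 ≤ i) (hj : 1 ≤ j) :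
    (if 1 ≤ j ∧ j ≤ n + 1 then ((n + 1 - j : ℕ) : ℂ) * gval q i (n + 1 - j) else 0)
      - (if 1 ≤ i ∧ i ≤ n + 1 then ((n + 1 - i : ℕ) : ℂ) * gval q j (n + 1 - i) else 0)
      = ((i : ℂ) - (j : ℂ)) * gval q (i + j - 1) n := by
  unfold gval
  by_cases hE : n + 1 = i + j
  · rw [if_pos (show 1 ≤ j ∧ j ≤ n + 1 by omega), if_pos (show 1 ≤ i ∧ i ≤ n + 1 by omega),
      if_pos (show 1 ≤ i ∧ i ≤ n + 1 - j + 1 by omega),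
      if_pos (show 1 ≤ j ∧ j ≤ n + 1 - i + 1 by omega),
      if_pos (show 1 ≤ i + j - 1 ∧ i + j - 1 ≤ n + 1 by omega),
      if_pos (show n + 1 - j = i from by omega),
      if_pos (show n + 1 - i = j from by omega),
      if_pos (show n = i + j - 1 from by omega),
      show n + 1 - j + 1 - i = 1 from by omega,
      show n + 1 - i + 1 - j = 1 from by omega,
      show n + 1 - (i + j - 1) = 1 from by omega,
      show n + 1 - j = i from by omega,
      show n + 1 - i = j from by omega]
    push_cast
    ring
  · by_cases hD : i + j ≤ n + 2
    · rw [if_pos (show 1 ≤ j ∧ j ≤ n + 1 by omega), if_pos (show 1 ≤ i ∧ i ≤ n + 1 by omega),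
        if_pos (show 1 ≤ i ∧ i ≤ n + 1 - j + 1 by omega),
        if_pos (show 1 ≤ j ∧ j ≤ n + 1 - i + 1 by omega),
        if_pos (show 1 ≤ i + j - 1 ∧ i + j - 1 ≤ n + 1 by omega),
        if_neg (show ¬ (n + 1 - j = i) from by omega),
        if_neg (show ¬ (n + 1 - i = j) from by omega),
        if_neg (show ¬ (n = i + j - 1) from by omega),
        show n + 1 - j + 1 - i = n + 2 - (i + j) from by omega,
        show n + 1 - i + 1 - j = n + 2 - (i + j) from by omega,
        show n + 1 - (i + j - 1) = n + 2 - (i + j) from by omega,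
        Nat.cast_sub (show i + j ≤ n + 2 from hD),
        Nat.cast_sub (show j ≤ n + 1 from by omega),
        Nat.cast_sub (show i ≤ n + 1 from by omega)]
      push_cast
      ring
    · have hz3 : ¬ (n = i + j - 1) := by omega
      have hz6 : ¬ (1 ≤ i + j - 1 ∧ i + j - 1 ≤ n + 1) := by omega
      rw [if_neg hz3, if_neg hz6]
      have e1 : (if 1 ≤ j ∧ j ≤ n + 1 then ((n + 1 - j : ℕ) : ℂ) *
          ((if 1 ≤ i ∧ i ≤ n + 1 - j + 1 then ((n + 1 - j + 1 - i : ℕ) : ℂ) * q (n + 1 - j + 1 - i) else 0)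
            + (if n + 1 - j = i then 1 else 0)) else 0) = 0 := by
        by_cases hA : j ≤ n + 1
        · rw [if_pos ⟨hj, hA⟩, if_neg (show ¬ (1 ≤ i ∧ i ≤ n + 1 - j + 1) from by omega),
            if_neg (show ¬ (n + 1 - j = i) from by omega)]
          norm_num
        · rw [if_neg (fun h => hA h.2)]
      have e2 : (if 1 ≤ i ∧ i ≤ n + 1 then ((n + 1 - i : ℕ) : ℂ) *
          ((if 1 ≤ j ∧ j ≤ n + 1 - i + 1 then ((n + 1 - i + 1 - j : ℕ) : ℂ) * q (n + 1 - i + 1 - j) else 0)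
            + (if n + 1 - i = j then 1 else 0)) else 0) = 0 := by
        by_cases hB : i ≤ n + 1
        · rw [if_pos ⟨hi, hB⟩, if_neg (show ¬ (1 ≤ j ∧ j ≤ n + 1 - i + 1) from by omega),
            if_neg (show ¬ (n + 1 - i = j) from by omega)]
          norm_num
        · rw [if_neg (fun h => hB h.2)]
      rw [e1, e2]
      norm_num

lemma Lfun_Ysym {m : ℕ} (i j : ℕ) (hi : 1 ≤ i) (p : Fin m → ℂ) (r : Fin m) :
    Lfun m j (Ysym i p) r =
      (if 1 ≤ j ∧ j ≤ (r : ℕ) + 1 then (((r : ℕ) + 1 - j : ℕ) : ℂ) *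
        gval (qfun p) i ((r : ℕ) + 1 - j) else 0) := by
  unfold Lfun
  split_ifs with h
  · rw [Ysym_eq_gval i hi p _]
  · rfl

lemma bracket_eq {m : ℕ} (i j : ℕ) (hi : 1 ≤ i) (hj : 1 ≤ j) (p : Fin m → ℂ) (r : Fin m) :
    bracket (Ysym i) (Ysym j) p r = ((i : ℂ) - (j : ℂ)) * gval (qfun p) (i + j - 1) (r : ℕ) := by
  unfold bracket
  rw [fderiv_Ysym i hi, fderiv_Ysym j hj, Pi.sub_apply, Lclm_apply, Lclm_apply,
    Lfun_Ysym i j hi p r, Lfun_Ysym j i hj p r]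
  exact core (qfun p) (r : ℕ) i j hi hj

/-- (Relation (25) of the paper.) For `1 ≤ i, j ≤ m−1`:
`[Y_i, Y_j] = (i − j)·Y_{i+j−1}` if `i + j ≤ m`, and `[Y_i, Y_j] = 0` if `i + j > m`. -/
theorem stmt6 {m : ℕ} (hm : 2 ≤ m) (i j : ℕ)
    (hi1 : 1 ≤ i) (hi2 : i ≤ m - 1) (hj1 : 1 ≤ j) (hj2 : j ≤ m - 1) :
    (i + j ≤ m →
      bracket (Ysym i) (Ysym j)
        = fun p : Fin m → ℂ => ((i : ℂ) - (j : ℂ)) • Ysym (i + j - 1) p) ∧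
    (m < i + j → bracket (Ysym i) (Ysym j) = (0 : (Fin m → ℂ) → Fin m → ℂ)) := by
  constructor
  · intro _
    funext p r
    rw [bracket_eq i j hi1 hj1 p r]
    rw [Pi.smul_apply, smul_eq_mul, Ysym_eq_gval (i + j - 1) (by omega) p r]
  · intro hlt
    funext p r
    rw [bracket_eq i j hi1 hj1 p r]
    rw [gval_zero (qfun p) (i + j - 1) (r : ℕ) (by have := r.isLt; omega)]
    simp
end
end

section
/- There exists a map γ̃ : N → End_ℂ(A) such that γ̃(p) is ε-symmetric for every p ∈ N and γ̃ satisfies condition (∗), if and only if the function p ↦ ε(T(p), T(p)) is constant on N and the endomorphism γ(p) is ε-symmetric for every p ∈ N. -/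
lemma stmt9_const_helper {A : Type*} [NormedAddCommGroup A] [NormedSpace ℂ A]
    {f : A → ℂ} {N : Set A} (hNopen : IsOpen N) (hNconn : IsPreconnected N)
    (h : ∀ p ∈ N, HasFDerivAt f (0 : A →L[ℂ] ℂ) p)
    {x y : A} (hx : x ∈ N) (hy : y ∈ N) : f x = f y := by
  haveI := Subtype.preconnectedSpace hNconn
  have hloc : IsLocallyConstant (fun q : N => f q) := by
    rw [IsLocallyConstant.iff_exists_open]
    rintro ⟨q, hq⟩
    obtain ⟨r, hr, hball⟩ := Metric.isOpen_iff.1 hNopen q hq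
    refine ⟨Subtype.val ⁻¹' Metric.ball q r,
      Metric.isOpen_ball.preimage continuous_subtype_val, by simpa using hr, ?_⟩
    rintro ⟨q', hq'⟩ hmem
    have hconv : Convex ℝ (Metric.ball q r) := convex_ball q r
    exact hconv.is_const_of_fderivWithin_eq_zero
      (fun z hz => ((h z (hball hz)).differentiableAt).differentiableWithinAt)
      (fun z hz => by
        rw [fderivWithin_of_isOpen Metric.isOpen_ball hz]
        exact (h z (hball hz)).fderiv)
      hmem (Metric.mem_ball_self hr)
  exact hloc.apply_eq_of_preconnectedSpace ⟨x, hx⟩ ⟨y, hy⟩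

section
variable {A : Type*} [NormedCommRing A] [NormedAlgebra ℂ A] [FiniteDimensional ℂ A]

noncomputable def stmt9_B (ε : A →ₗ[ℂ] A →ₗ[ℂ] ℂ) : A →L[ℂ] A →L[ℂ] ℂ :=
  LinearMap.toContinuousLinearMap
    { toFun := fun x => LinearMap.toContinuousLinearMap (ε x)
      map_add' := fun x y => by ext z; simp
      map_smul' := fun c x => by ext z; simp }

lemma stmt9_B_apply (ε : A →ₗ[ℂ] A →ₗ[ℂ] ℂ) (x y : A) : stmt9_B ε x y = ε x y := rfl

lemma stmt9_aux1 (ε : A →ₗ[ℂ] A →ₗ[ℂ] ℂ) {T : A → A} {p : A}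
    (hT : DifferentiableAt ℂ T p) (v u : A) :
    fderiv ℂ (fun q => ε (T q) v) p u = ε (fderiv ℂ T p u) v := by
  have h : HasFDerivAt (fun q => ε (T q) v)
      (((stmt9_B ε).flip v).comp (fderiv ℂ T p)) p := by
    have := ((stmt9_B ε).flip v).hasFDerivAt.comp p hT.hasFDerivAt
    exact this
  rw [h.fderiv]; rfl

lemma stmt9_aux2 (ε : A →ₗ[ℂ] A →ₗ[ℂ] ℂ) {T : A → A} {p : A}
    (hT : DifferentiableAt ℂ T p) :
    HasFDerivAt (fun q => ε (T q) (T q))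
      (((stmt9_B ε) (T p)).comp (fderiv ℂ T p) +
        ((stmt9_B ε).comp (fderiv ℂ T p)).flip (T p)) p :=
  ((stmt9_B ε).hasFDerivAt.comp p hT.hasFDerivAt).clm_apply hT.hasFDerivAt

end

/-- (Equivalence part of Lemma 21 of the paper.) Let `A` be a
finite-dimensional commutative associative unital `ℂ`-algebra with a nondegenerate,
symmetric, multiplication-invariant bilinear form `ε`. Let `N ⊆ A` be connected open,
`T : N → A` holomorphic with `T p` invertible for `p ∈ N`, `ψ(p) := ε(T p, ·)`, and let
`γ : N → End_ℂ(A)` be the map characterized by `ε(T p · γ p v, u) = (Dψ(p)(u))(v)`.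
Then there exists `γ̃ : N → End_ℂ(A)` with `γ̃ p` `ε`-symmetric for all `p ∈ N` satisfying
condition (∗): `(Dψ(p)(u))(v) = ψ(p)(u·γ̃ p v − γ̃ p (u·v))`, if and only if
`p ↦ ε(T p, T p)` is constant on `N` and `γ p` is `ε`-symmetric for every `p ∈ N`. -/
theorem stmt9 {A : Type*} [NormedCommRing A] [NormedAlgebra ℂ A] [FiniteDimensional ℂ A]
    (ε : A →ₗ[ℂ] A →ₗ[ℂ] ℂ)
    (hεsym : ∀ x y : A, ε x y = ε y x)
    (hεnd : ∀ x : A, (∀ y : A, ε x y = 0) → x = 0)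
    (hεinv : ∀ x y z : A, ε (x * y) z = ε x (y * z))
    (N : Set A) (hNopen : IsOpen N) (hNconn : IsConnected N)
    (T : A → A) (hT : ∀ p ∈ N, DifferentiableAt ℂ T p)
    (hTinv : ∀ p ∈ N, IsUnit (T p))
    (γ : A → Module.End ℂ A)
    (hγdef : ∀ p ∈ N, ∀ u v : A,
      ε (T p * γ p v) u = fderiv ℂ (fun q => ε (T q) v) p u) :
    (∃ γt : A → Module.End ℂ A,
        (∀ p ∈ N, ∀ x y : A, ε (γt p x) y = ε x (γt p y)) ∧
        (∀ p ∈ N, ∀ u v : A,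
          fderiv ℂ (fun q => ε (T q) v) p u = ε (T p) (u * γt p v - γt p (u * v)))) ↔
      ((∃ c : ℂ, ∀ p ∈ N, ε (T p) (T p) = c) ∧
        ∀ p ∈ N, ∀ x y : A, ε (γ p x) y = ε x (γ p y)) := by
  constructor
  · rintro ⟨γt, hsymt, hstar⟩
    -- zero pairing of derivative with T p
    have hz : ∀ p ∈ N, ∀ u : A, ε (fderiv ℂ T p u) (T p) = 0 := by
      intro p hp u
      have h1 := hstar p hp u (T p)
      rw [stmt9_aux1 ε (hT p hp) (T p) u] at h1
      rw [h1, map_sub]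
      have e1 : ε (T p) (u * γt p (T p)) = ε (T p * u) (γt p (T p)) := (hεinv _ _ _).symm
      have e2 : ε (T p) (γt p (u * T p)) = ε (T p * u) (γt p (T p)) := by
        rw [hεsym, hsymt p hp, mul_comm u (T p)]
      rw [e1, e2, sub_self]
    constructor
    · -- constancy
      have hc0 : ∀ p ∈ N, HasFDerivAt (fun q => ε (T q) (T q)) (0 : A →L[ℂ] ℂ) p := by
        intro p hp
        have h := stmt9_aux2 ε (hT p hp)
        convert h using 1
        symm; ext u
        simp only [ContinuousLinearMap.add_apply, ContinuousLinearMap.coe_comp',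
          Function.comp_apply, ContinuousLinearMap.flip_apply,
          ContinuousLinearMap.zero_apply, stmt9_B_apply]
        rw [hεsym (T p), hz p hp u, add_zero]
      obtain ⟨p₀, hp₀⟩ := hNconn.nonempty
      exact ⟨ε (T p₀) (T p₀), fun p hp =>
        stmt9_const_helper hNopen hNconn.isPreconnected hc0 hp hp₀⟩
    · -- symmetry of γ
      intro p hp x y
      obtain ⟨t, ht⟩ := hTinv p hp
      set s := ((t⁻¹ : Aˣ) : A) with hs
      have hts : T p * s = 1 := by rw [← ht]; exact t.mul_inv
      have hD : ∀ a b : A, ε (γ p a) b = ε (T p) ((s * b) * γt p a - γt p ((s * b) * a)) := by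
        intro a b
        have e0 : ε (γ p a) b = ε (T p * γ p a) (s * b) := by
          calc ε (γ p a) b = ε (γ p a) (T p * (s * b)) := by
                rw [← mul_assoc, hts, one_mul]
            _ = ε (γ p a * T p) (s * b) := (hεinv _ _ _).symm
            _ = ε (T p * γ p a) (s * b) := by rw [mul_comm (γ p a) (T p)]
        rw [e0, hγdef p hp (s * b) a, hstar p hp (s * b) a]
      rw [hεsym x (γ p y), hD x y, hD y x, map_sub, map_sub]
      have t1 : ε (T p) ((s * y) * γt p x) = ε (T p) ((s * x) * γt p y) := by
        have k : ∀ a b : A, ε (T p) ((s * b) * γt p a) = ε b (γt p a) := by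
          intro a b
          rw [← hεinv, ← mul_assoc, hts, one_mul]
        rw [k x y, k y x, hεsym y (γt p x), hsymt p hp x y]
      have t2 : ε (T p) (γt p ((s * y) * x)) = ε (T p) (γt p ((s * x) * y)) := by
        ring_nf
      rw [t1, t2]
  · rintro ⟨⟨c, hc⟩, hγsym⟩
    refine ⟨γ, hγsym, ?_⟩
    intro p hp u v
    -- derivative of the constant is zero
    have hconst : (fun q => ε (T q) (T q)) =ᶠ[nhds p] fun _ => c :=
      Filter.eventuallyEq_of_mem (hNopen.mem_nhds hp) (fun q hq => hc q hq)
    have h0 : HasFDerivAt (fun q => ε (T q) (T q)) (0 : A →L[ℂ] ℂ) p :=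
      (hasFDerivAt_const c p).congr_of_eventuallyEq hconst
    have h1 := (stmt9_aux2 ε (hT p hp)).unique h0
    have hz : ∀ w : A, ε (fderiv ℂ T p w) (T p) = 0 := by
      intro w
      have h2 := congrArg (fun L : A →L[ℂ] ℂ => L w) h1
      simp only [ContinuousLinearMap.add_apply, ContinuousLinearMap.coe_comp',
        Function.comp_apply, ContinuousLinearMap.flip_apply,
        ContinuousLinearMap.zero_apply, stmt9_B_apply] at h2
      rw [hεsym (T p)] at h2
      have := add_self_eq_zero.mp h2
      exact this
    have hγT : γ p (T p) = 0 := by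
      have h3 : T p * γ p (T p) = 0 := by
        apply hεnd
        intro w
        rw [hγdef p hp w (T p), stmt9_aux1 ε (hT p hp) (T p) w, hz w]
      exact (hTinv p hp).mul_left_cancel (by rw [h3, mul_zero])
    rw [map_sub]
    have term2 : ε (T p) (γ p (u * v)) = 0 := by
      rw [hεsym, hγsym p hp, hγT, map_zero]
    have term1 : ε (T p) (u * γ p v) = ε (T p * γ p v) u := by
      rw [hεinv, mul_comm (γ p v) u]
    rw [term1, term2, sub_zero, hγdef p hp u v]
end

section
/- Assume that p ↦ ε(T(p), T(p)) is constant on N and that γ(p) is ε-symmetric for every p ∈ N. Then γ itself satisfies condition (∗); and moreover, every map γ̃ : N → End_ℂ(A) with γ̃(p) ε-symmetric for all p which satisfies condition (∗) is of the form γ̃(p) = γ(p) + L_{x(p)} for all p ∈ N, where x(p) := γ̃(p)(T(p)) · T(p)^{-1} and L_x ∈ End_ℂ(A) denotes multiplication by x (L_x(v) = x·v). -/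
/-!
Differentiating the constant `ε(T, T)` shows `ε(DT·u, T) = 0`, so the defining identity of `γ`
gives `T · γ(T) = 0`, i.e. `γ(T) = 0`; by symmetry `ε(T, γ w) = ε(γ T, w) = 0`, and (∗) for `γ`
is then the defining identity rewritten by invariance. For uniqueness, `δ := γ̃ - γ` is
`ε`-symmetric and satisfies `ε(T, u·δ v - δ(u·v)) = 0`; moving everything to the left of `ε`
by symmetry and invariance gives `δ(T·u) = δ(T)·u`, and `δ(T) = γ̃(T)` since `γ(T) = 0`.
-/

open Filter Topology

section Calculus

variable {𝕜 E F G H : Type*} [RCLike 𝕜]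
  [NormedAddCommGroup E] [NormedSpace 𝕜 E]
  [NormedAddCommGroup F] [NormedSpace 𝕜 F] [FiniteDimensional 𝕜 F]
  [NormedAddCommGroup G] [NormedSpace 𝕜 G] [FiniteDimensional 𝕜 G]
  [NormedAddCommGroup H] [NormedSpace 𝕜 H]

theorem fderiv_bilinear_apply (ε : F →ₗ[𝕜] G →ₗ[𝕜] H) {T : E → F} {S : E → G} {p : E}
    (hT : DifferentiableAt 𝕜 T p) (hS : DifferentiableAt 𝕜 S p) (u : E) :
    fderiv 𝕜 (fun q => ε (T q) (S q)) p u =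
      ε (T p) (fderiv 𝕜 S p u) + ε (fderiv 𝕜 T p u) (S p) :=
  DFunLike.congr_fun
    (ε.toContinuousBilinearMap.hasFDerivAt_of_bilinear hT.hasFDerivAt hS.hasFDerivAt).fderiv u

theorem fderiv_bilinear_apply_const (ε : F →ₗ[𝕜] G →ₗ[𝕜] H) {T : E → F} {p : E}
    (hT : DifferentiableAt 𝕜 T p) (v : G) (u : E) :
    fderiv 𝕜 (fun q => ε (T q) v) p u = ε (fderiv 𝕜 T p u) v := by
  simp [fderiv_bilinear_apply ε hT (differentiableAt_const v)]

theorem bilinear_fderiv_apply_self_eq_zero (ε : F →ₗ[𝕜] F →ₗ[𝕜] 𝕜)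
    (hεsym : ∀ x y : F, ε x y = ε y x) {T : E → F} {p : E} (hT : DifferentiableAt 𝕜 T p)
    {c : 𝕜} (hc : (fun q => ε (T q) (T q)) =ᶠ[𝓝 p] fun _ => c) (u : E) :
    ε (fderiv 𝕜 T p u) (T p) = 0 := by
  have hzero : fderiv 𝕜 (fun q => ε (T q) (T q)) p u = 0 := by
    rw [hc.fderiv_eq, fderiv_const_apply]
    rfl
  rw [fderiv_bilinear_apply ε hT hT, hεsym (T p)] at hzero
  simpa using hzero

end Calculus

section Algebra

variable {𝕜 A : Type*} [CommRing 𝕜] [CommRing A] [Module 𝕜 A] {ε : A →ₗ[𝕜] A →ₗ[𝕜] 𝕜}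

theorem eq_zero_of_bilinear_mul_eq_zero (hεnd : ∀ x : A, (∀ y : A, ε x y = 0) → x = 0)
    {t x : A} (ht : IsUnit t) (hx : ∀ u, ε (t * x) u = 0) : x = 0 :=
  ht.mul_left_cancel <| by rw [hεnd _ hx, mul_zero]

theorem bilinear_mul_apply_eq_of_apply_self_eq_zero
    (hεinv : ∀ x y z : A, ε (x * y) z = ε x (y * z)) {g : Module.End 𝕜 A}
    (hg : ∀ x y : A, ε (g x) y = ε x (g y)) {t : A} (hgt : g t = 0) (u v : A) :
    ε (t * g v) u = ε t (u * g v - g (u * v)) := by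
  rw [map_sub, ← hg t, hgt, map_zero, LinearMap.zero_apply, sub_zero, hεinv, mul_comm]

theorem apply_mul_eq_mul_of_bilinear_eq_zero (hεnd : ∀ x : A, (∀ y : A, ε x y = 0) → x = 0)
    (hεinv : ∀ x y z : A, ε (x * y) z = ε x (y * z)) {δ : Module.End 𝕜 A}
    (hδ : ∀ x y : A, ε (δ x) y = ε x (δ y)) {t : A}
    (hδt : ∀ u v : A, ε t (u * δ v - δ (u * v)) = 0) (u : A) :
    δ (t * u) = δ t * u := by
  refine sub_eq_zero.mp (hεnd _ fun y => ?_)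
  rw [map_sub, LinearMap.sub_apply, hδ, hεinv, hεinv, hδ, ← map_sub, hδt]

theorem apply_eq_mul_inverse_mul_of_bilinear_eq_zero
    (hεnd : ∀ x : A, (∀ y : A, ε x y = 0) → x = 0)
    (hεinv : ∀ x y z : A, ε (x * y) z = ε x (y * z)) {δ : Module.End 𝕜 A}
    (hδ : ∀ x y : A, ε (δ x) y = ε x (δ y)) {t : A} (ht : IsUnit t)
    (hδt : ∀ u v : A, ε t (u * δ v - δ (u * v)) = 0) (v : A) :
    δ v = δ t * Ring.inverse t * v := by
  have := apply_mul_eq_mul_of_bilinear_eq_zero hεnd hεinv hδ hδt (Ring.inverse t * v)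
  rwa [← mul_assoc, Ring.mul_inverse_cancel t ht, one_mul, ← mul_assoc] at this

end Algebra

theorem stmt10_general {A : Type*} [NormedCommRing A] [NormedAlgebra ℂ A] [FiniteDimensional ℂ A]
    (ε : A →ₗ[ℂ] A →ₗ[ℂ] ℂ)
    (hεsym : ∀ x y : A, ε x y = ε y x)
    (hεnd : ∀ x : A, (∀ y : A, ε x y = 0) → x = 0)
    (hεinv : ∀ x y z : A, ε (x * y) z = ε x (y * z))
    (N : Set A) (hNopen : IsOpen N)
    (T : A → A) (hT : ∀ p ∈ N, DifferentiableAt ℂ T p)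
    (hTinv : ∀ p ∈ N, IsUnit (T p))
    (γ : A → Module.End ℂ A)
    (hγdef : ∀ p ∈ N, ∀ u v : A,
      ε (T p * γ p v) u = fderiv ℂ (fun q => ε (T q) v) p u)
    (hconst : ∃ c : ℂ, ∀ p ∈ N, ε (T p) (T p) = c)
    (hγsym : ∀ p ∈ N, ∀ x y : A, ε (γ p x) y = ε x (γ p y)) :
    (∀ p ∈ N, ∀ u v : A,
        fderiv ℂ (fun q => ε (T q) v) p u = ε (T p) (u * γ p v - γ p (u * v))) ∧
      ∀ γt : A → Module.End ℂ A,
        (∀ p ∈ N, ∀ x y : A, ε (γt p x) y = ε x (γt p y)) →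
        (∀ p ∈ N, ∀ u v : A,
          fderiv ℂ (fun q => ε (T q) v) p u = ε (T p) (u * γt p v - γt p (u * v))) →
        ∀ p ∈ N, ∀ v : A,
          γt p v = γ p v + (γt p (T p) * Ring.inverse (T p)) * v := by
  obtain ⟨c, hc⟩ := hconst
  have hγT : ∀ p ∈ N, γ p (T p) = 0 := fun p hp =>
    eq_zero_of_bilinear_mul_eq_zero hεnd (hTinv p hp) fun u => by
      rw [hγdef p hp, fderiv_bilinear_apply_const ε (hT p hp),
        bilinear_fderiv_apply_self_eq_zero ε hεsym (hT p hp)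
          (eventually_of_mem (hNopen.mem_nhds hp) hc)]
  have hγ : ∀ p ∈ N, ∀ u v : A,
      fderiv ℂ (fun q => ε (T q) v) p u = ε (T p) (u * γ p v - γ p (u * v)) := fun p hp u v => by
    rw [← hγdef p hp, bilinear_mul_apply_eq_of_apply_self_eq_zero hεinv (hγsym p hp) (hγT p hp)]
  refine ⟨hγ, fun γt hγtsym hγt p hp v => ?_⟩
  have hδsym : ∀ x y : A, ε ((γt p - γ p) x) y = ε x ((γt p - γ p) y) := fun x y => by
    simp only [LinearMap.sub_apply, map_sub, hγtsym p hp, hγsym p hp]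
  have hδ : ∀ u v : A, ε (T p) (u * (γt p - γ p) v - (γt p - γ p) (u * v)) = 0 := fun u v => by
    have h := (hγt p hp u v).symm.trans (hγ p hp u v)
    simp only [LinearMap.sub_apply, mul_sub, map_sub] at h ⊢
    linear_combination h
  have h := apply_eq_mul_inverse_mul_of_bilinear_eq_zero hεnd hεinv hδsym (hTinv p hp) hδ v
  rw [LinearMap.sub_apply, LinearMap.sub_apply, hγT p hp, sub_zero] at h
  rw [← h, add_sub_cancel]

/-- (Steps 4 and 5 of Lemma 21 of the paper.) In the setting of Lemma 21,
assume `p ↦ ε(T p, T p)` is constant on `N` and `γ p` is `ε`-symmetric for every `p ∈ N`.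
Then `γ` itself satisfies condition (∗); and every `γ̃ : N → End_ℂ(A)` with `γ̃ p`
`ε`-symmetric on `N` satisfying (∗) equals `γ p + L_{x p}` where
`x p := γ̃ p (T p) · (T p)⁻¹` and `L_x` is multiplication by `x`. -/
theorem stmt10 {A : Type*} [NormedCommRing A] [NormedAlgebra ℂ A] [FiniteDimensional ℂ A]
    (ε : A →ₗ[ℂ] A →ₗ[ℂ] ℂ)
    (hεsym : ∀ x y : A, ε x y = ε y x)
    (hεnd : ∀ x : A, (∀ y : A, ε x y = 0) → x = 0)
    (hεinv : ∀ x y z : A, ε (x * y) z = ε x (y * z))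
    (N : Set A) (hNopen : IsOpen N) (hNconn : IsConnected N)
    (T : A → A) (hT : ∀ p ∈ N, DifferentiableAt ℂ T p)
    (hTinv : ∀ p ∈ N, IsUnit (T p))
    (γ : A → Module.End ℂ A)
    (hγdef : ∀ p ∈ N, ∀ u v : A,
      ε (T p * γ p v) u = fderiv ℂ (fun q => ε (T q) v) p u)
    (hconst : ∃ c : ℂ, ∀ p ∈ N, ε (T p) (T p) = c)
    (hγsym : ∀ p ∈ N, ∀ x y : A, ε (γ p x) y = ε x (γ p y)) :
    (∀ p ∈ N, ∀ u v : A,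
        fderiv ℂ (fun q => ε (T q) v) p u = ε (T p) (u * γ p v - γ p (u * v))) ∧
      ∀ γt : A → Module.End ℂ A,
        (∀ p ∈ N, ∀ x y : A, ε (γt p x) y = ε x (γt p y)) →
        (∀ p ∈ N, ∀ u v : A,
          fderiv ℂ (fun q => ε (T q) v) p u = ε (T p) (u * γt p v - γt p (u * v))) →
        ∀ p ∈ N, ∀ v : A,
          γt p v = γ p v + (γt p (T p) * Ring.inverse (T p)) * v :=
  stmt10_general ε hεsym hεnd hεinv N hNopen T hT hTinv γ hγdef hconst hγsym
end
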